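/- Within the set {a₁, a₂, a₃, a₄, a₅, a₆, a₇}, the equivalence classes for equivalence over P₀⁴(8) are exactly {a₁, a₅}, {a₂, a₃, a₄, a₆}, and {a₇}: a₁ is equivalent to a₅, the four matrices a₂, a₃, a₄, a₆ are mutually equivalent, a₇ is equivalent only to itself, and no two matrices from different classes are equivalent. Consequently there are exactly three small covers over P₀⁴(8) up to weakly equivariant homeomorphism, represented by a₁, a₂ and a₇. -/
import Mathlib


open Matrix

def V0F : Finset (Finset (Fin 8)) :=
  {{0,1,2,3}, {0,1,2,7}, {0,1,3,4}, {0,1,4,5}, {0,1,5,6}, {0,1,6,7}, {0,2,3,4}, {0,2,4,5}, {0,2,5,6}, {0,2,6,7}, {1,2,3,7}, {1,3,4,6}, {1,3,6,7}, {1,4,5,6}, {2,3,4,7}, {2,4,5,7}, {2,5,6,7}, {3,4,5,6}, {3,4,5,7}, {3,5,6,7}}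
def a1 : Matrix (Fin 4) (Fin 8) (ZMod 2) :=
  !![1, 0, 0, 0, 1, 0, 0, 1;
    0, 1, 0, 0, 1, 0, 1, 0;
    0, 0, 1, 0, 1, 1, 1, 0;
    0, 0, 0, 1, 0, 1, 0, 1]
def a2 : Matrix (Fin 4) (Fin 8) (ZMod 2) :=
  !![1, 0, 0, 0, 1, 0, 0, 1;
    0, 1, 0, 0, 1, 0, 1, 0;
    0, 0, 1, 0, 1, 1, 1, 1;
    0, 0, 0, 1, 0, 1, 0, 1]
def a3 : Matrix (Fin 4) (Fin 8) (ZMod 2) :=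
  !![1, 0, 0, 0, 0, 0, 1, 1;
    0, 1, 0, 0, 1, 0, 1, 0;
    0, 0, 1, 0, 1, 1, 1, 0;
    0, 0, 0, 1, 0, 1, 0, 1]
def a4 : Matrix (Fin 4) (Fin 8) (ZMod 2) :=
  !![1, 0, 0, 0, 0, 0, 1, 1;
    0, 1, 0, 0, 1, 0, 1, 0;
    0, 0, 1, 0, 1, 1, 0, 1;
    0, 0, 0, 1, 0, 1, 1, 1]
def a5 : Matrix (Fin 4) (Fin 8) (ZMod 2) :=
  !![1, 0, 0, 0, 0, 0, 1, 1;
    0, 1, 0, 0, 1, 1, 0, 1;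
    0, 0, 1, 0, 1, 0, 1, 0;
    0, 0, 0, 1, 0, 1, 1, 1]
def a6 : Matrix (Fin 4) (Fin 8) (ZMod 2) :=
  !![1, 0, 0, 0, 0, 0, 1, 1;
    0, 1, 0, 0, 1, 1, 1, 1;
    0, 0, 1, 0, 1, 0, 1, 0;
    0, 0, 0, 1, 0, 1, 0, 1]
def a7 : Matrix (Fin 4) (Fin 8) (ZMod 2) :=
  !![1, 0, 0, 0, 0, 1, 1, 1;
    0, 1, 0, 0, 1, 1, 0, 1;
    0, 0, 1, 0, 1, 1, 1, 0;
    0, 0, 0, 1, 1, 0, 1, 1]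

/-- The 8×8 permutation matrix of σ over ℤ/2: P_σ e_j = e_(σ j). -/
def permMat (σ : Equiv.Perm (Fin 8)) : Matrix (Fin 8) (Fin 8) (ZMod 2) :=
  Matrix.of fun i j => if i = σ j then 1 else 0

/-- σ is a combinatorial automorphism of the polytope. -/
def IsAut (σ : Equiv.Perm (Fin 8)) : Prop :=
  V0F.image (fun v => v.image (fun x => σ x)) = V0F

/-- Equivalence of characteristic matrices over the polytope. -/
def MatEquiv (Λ Λ' : Matrix (Fin 4) (Fin 8) (ZMod 2)) : Prop :=
  ∃ (g : Matrix (Fin 4) (Fin 4) (ZMod 2)) (σ : Equiv.Perm (Fin 8)),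
    IsUnit g ∧ IsAut σ ∧ Λ' = g * Λ * permMat σ

def A : Fin 7 → Matrix (Fin 4) (Fin 8) (ZMod 2) := ![a1, a2, a3, a4, a5, a6, a7]

/-- Class labels: a₁,a₅ ↦ 0; a₂,a₃,a₄,a₆ ↦ 1; a₇ ↦ 2. -/
def cls : Fin 7 → Fin 3 := ![0, 1, 1, 1, 0, 1, 2]

-- ===== auxiliary development =====

/-- The invariant: number of pairs (t, v) with v ∈ V₀, t a 4-element set of column
indices whose columns sum to zero, and t disjoint from v. -/
def kerInv (Λ : Matrix (Fin 4) (Fin 8) (ZMod 2)) : ℕ :=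
  ((Finset.univ ×ˢ V0F).filter fun p : Finset (Fin 8) × Finset (Fin 8) =>
    (∀ i, ∑ k ∈ p.1, Λ i k = 0) ∧ p.1.card = 4 ∧ Disjoint p.1 p.2).card

def sA : Equiv.Perm (Fin 8) :=
  ⟨![2,7,0,6,5,4,3,1], ![2,7,0,6,5,4,3,1],
   by intro x; fin_cases x <;> rfl, by intro x; fin_cases x <;> rfl⟩
def sB : Equiv.Perm (Fin 8) :=
  ⟨![4,3,5,7,2,0,1,6], ![5,6,4,1,0,2,7,3],
   by intro x; fin_cases x <;> rfl, by intro x; fin_cases x <;> rfl⟩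
def sC : Equiv.Perm (Fin 8) :=
  ⟨![5,6,4,1,0,2,7,3], ![4,3,5,7,2,0,1,6],
   by intro x; fin_cases x <;> rfl, by intro x; fin_cases x <;> rfl⟩

lemma autA : IsAut sA := by unfold IsAut; decide
lemma autB : IsAut sB := by unfold IsAut; decide
lemma autC : IsAut sC := by unfold IsAut; decide
lemma aut_one : IsAut 1 := by unfold IsAut; decide

lemma permMat_one : permMat 1 = (1 : Matrix (Fin 8) (Fin 8) (ZMod 2)) := by decide

lemma mkEquiv (Λ Λ' : Matrix (Fin 4) (Fin 8) (ZMod 2)) (g : Matrix (Fin 4) (Fin 4) (ZMod 2))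
    (σ : Equiv.Perm (Fin 8)) (h1 : g.det = 1) (h2 : IsAut σ)
    (h3 : Λ' = g * Λ * permMat σ) : MatEquiv Λ Λ' :=
  ⟨g, σ, (Matrix.isUnit_iff_isUnit_det g).mpr (by rw [h1]; exact isUnit_one), h2, h3⟩

lemma matEquiv_refl (Λ : Matrix (Fin 4) (Fin 8) (ZMod 2)) : MatEquiv Λ Λ :=
  mkEquiv Λ Λ 1 1 (by simp) aut_one (by rw [permMat_one]; simp)

lemma e15 : MatEquiv a1 a5 := mkEquiv _ _ !![0,1,0,0;1,0,1,1;0,1,1,0;1,1,0,0] sB (by decide) autB (by decide)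
lemma e51 : MatEquiv a5 a1 := mkEquiv _ _ !![0,0,1,0;0,1,1,1;1,1,1,0;1,0,0,0] sB (by decide) autB (by decide)
lemma e23 : MatEquiv a2 a3 := mkEquiv _ _ !![0,1,1,1;0,0,0,1;1,0,0,1;0,1,0,0] sA (by decide) autA (by decide)
lemma e24 : MatEquiv a2 a4 := mkEquiv _ _ !![0,1,0,0;0,1,1,1;1,0,1,0;1,1,0,0] sB (by decide) autB (by decide)
lemma e26 : MatEquiv a2 a6 := mkEquiv _ _ !![0,0,0,1;1,0,1,1;1,0,0,0;0,1,1,1] sC (by decide) autC (by decide)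
lemma e32 : MatEquiv a3 a2 := mkEquiv _ _ !![0,1,1,0;0,0,0,1;1,1,0,1;0,1,0,0] sA (by decide) autA (by decide)
lemma e34 : MatEquiv a3 a4 := mkEquiv _ _ !![0,0,0,1;1,0,0,0;1,0,1,1;0,1,1,1] sC (by decide) autC (by decide)
lemma e36 : MatEquiv a3 a6 := mkEquiv _ _ !![0,1,0,0;1,1,1,1;0,1,1,0;1,0,0,0] sB (by decide) autB (by decide)
lemma e42 : MatEquiv a4 a2 := mkEquiv _ _ !![1,0,0,1;1,0,0,0;1,0,1,1;0,1,1,1] sC (by decide) autC (by decide)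
lemma e43 : MatEquiv a4 a3 := mkEquiv _ _ !![0,1,0,0;0,1,1,1;1,1,1,0;1,0,0,0] sB (by decide) autB (by decide)
lemma e46 : MatEquiv a4 a6 := mkEquiv _ _ !![0,1,1,1;0,1,0,1;1,0,0,1;0,1,0,0] sA (by decide) autA (by decide)
lemma e62 : MatEquiv a6 a2 := mkEquiv _ _ !![0,0,1,0;0,1,1,1;1,1,1,0;1,0,0,0] sB (by decide) autB (by decide)
lemma e63 : MatEquiv a6 a3 := mkEquiv _ _ !![0,0,0,1;1,0,0,0;1,0,1,0;0,1,1,1] sC (by decide) autC (by decide)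
lemma e64 : MatEquiv a6 a4 := mkEquiv _ _ !![0,1,1,1;0,0,0,1;1,1,0,0;0,1,0,1] sA (by decide) autA (by decide)

-- ===== invariance of kerInv =====

lemma image_symm_image (τ : Equiv.Perm (Fin 8)) (s : Finset (Fin 8)) :
    ((s.image fun x => τ x).image fun x => τ.symm x) = s := by
  rw [Finset.image_image]
  have h2 : ((fun x => τ.symm x) ∘ fun x => τ x) = fun x => x :=
    funext fun x => τ.symm_apply_apply x
  rw [h2, Finset.image_id']

lemma image_image_symm (τ : Equiv.Perm (Fin 8)) (s : Finset (Fin 8)) :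
    ((s.image fun x => τ.symm x).image fun x => τ x) = s := by
  rw [Finset.image_image]
  have h2 : ((fun x => τ x) ∘ fun x => τ.symm x) = fun x => x :=
    funext fun x => τ.apply_symm_apply x
  rw [h2, Finset.image_id']

lemma isAut_symm {σ : Equiv.Perm (Fin 8)} (h : IsAut σ) : IsAut σ.symm := by
  unfold IsAut at h ⊢
  calc V0F.image (fun v => v.image fun x => σ.symm x)
      = (V0F.image (fun v => v.image fun x => σ x)).image
          (fun v => v.image fun x => σ.symm x) := by rw [h]
    _ = V0F.image (fun v => (v.image fun x => σ x).image fun x => σ.symm x) :=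
        Finset.image_image
    _ = V0F := by
        have h3 : (fun v : Finset (Fin 8) =>
            (v.image fun x => σ x).image fun x => σ.symm x) = fun v => v :=
          funext fun v => image_symm_image σ v
        rw [h3, Finset.image_id']

lemma mem_V0F_image {σ : Equiv.Perm (Fin 8)} (hσ : IsAut σ) {v : Finset (Fin 8)}
    (hv : v ∈ V0F) : (v.image fun x => σ x) ∈ V0F := by
  rw [← hσ]
  exact Finset.mem_image_of_mem _ hv

lemma mulVec_zero_iff {g : Matrix (Fin 4) (Fin 4) (ZMod 2)} (hg : IsUnit g)
    (x : Fin 4 → ZMod 2) : g.mulVec x = 0 ↔ x = 0 := by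
  obtain ⟨u, rfl⟩ := hg
  constructor
  · intro hx
    have h2 := congrArg (fun y => (↑u⁻¹ : Matrix (Fin 4) (Fin 4) (ZMod 2)) *ᵥ y) hx
    simp only [Matrix.mulVec_mulVec] at h2
    rw [Units.inv_mul] at h2
    rwa [Matrix.one_mulVec, Matrix.mulVec_zero] at h2
  · rintro rfl
    exact Matrix.mulVec_zero _

lemma sum_row (g : Matrix (Fin 4) (Fin 4) (ZMod 2)) (Λ : Matrix (Fin 4) (Fin 8) (ZMod 2))
    (σ : Equiv.Perm (Fin 8)) (s : Finset (Fin 8)) (i : Fin 4) :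
    ∑ k ∈ s, (g * Λ * permMat σ) i k
      = Matrix.mulVec g (fun m => ∑ k ∈ s.image (fun x => σ x), Λ m k) i := by
  have h1 : ∀ m k, (Λ * permMat σ) m k = Λ m (σ k) := by
    intro m k
    simp [Matrix.mul_apply, permMat, mul_ite, mul_one, mul_zero,
      Finset.sum_ite_eq', Finset.mem_univ]
  calc ∑ k ∈ s, (g * Λ * permMat σ) i k
      = ∑ k ∈ s, ∑ m, g i m * Λ m (σ k) := by
        refine Finset.sum_congr rfl fun k _ => ?_
        rw [Matrix.mul_assoc, Matrix.mul_apply]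
        exact Finset.sum_congr rfl fun m _ => by rw [h1]
    _ = ∑ m, g i m * ∑ k ∈ s, Λ m (σ k) := by
        rw [Finset.sum_comm]
        exact Finset.sum_congr rfl fun m _ => by rw [Finset.mul_sum]
    _ = ∑ m, g i m * ∑ k ∈ s.image (fun x => σ x), Λ m k := by
        refine Finset.sum_congr rfl fun m _ => ?_
        rw [Finset.sum_image (fun a _ b _ hab => σ.injective hab)]
    _ = _ := by simp [Matrix.mulVec, dotProduct]

/-- The Finset-image equivalence induced by a permutation. -/
def fEquiv (τ : Equiv.Perm (Fin 8)) : Finset (Fin 8) ≃ Finset (Fin 8) where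
  toFun s := s.image fun x => τ x
  invFun s := s.image fun x => τ.symm x
  left_inv s := image_symm_image τ s
  right_inv s := image_image_symm τ s

lemma kerInv_matEquiv {Λ Λ' : Matrix (Fin 4) (Fin 8) (ZMod 2)} (h : MatEquiv Λ Λ') :
    kerInv Λ = kerInv Λ' := by
  obtain ⟨g, σ, hg, hσ, rfl⟩ := h
  unfold kerInv
  refine Finset.card_equiv ((fEquiv σ.symm).prodCongr (fEquiv σ.symm)) ?_
  rintro ⟨s, w⟩
  have himg : ((s.image fun x => σ.symm x).image fun x => σ x) = s :=
    image_image_symm σ s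
  simp only [Finset.mem_filter, Finset.mem_product, Finset.mem_univ, true_and,
    Equiv.prodCongr_apply, Prod.map, fEquiv, Equiv.coe_fn_mk]
  constructor
  · rintro ⟨hw, hsum, hcard, hdisj⟩
    refine ⟨mem_V0F_image (isAut_symm hσ) hw, ?_, ?_, ?_⟩
    · intro i
      rw [sum_row, himg]
      have hz : (fun m => ∑ k ∈ s, Λ m k) = 0 := funext hsum
      rw [hz, Matrix.mulVec_zero]
      rfl
    · rw [Finset.card_image_of_injective _ σ.symm.injective, hcard]
    · exact (Finset.disjoint_image σ.symm.injective).mpr hdisj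
  · rintro ⟨hw, hsum, hcard, hdisj⟩
    refine ⟨?_, ?_, ?_, ?_⟩
    · have h2 := mem_V0F_image hσ hw
      rwa [image_image_symm σ w] at h2
    · have h2 : g.mulVec (fun m => ∑ k ∈ s, Λ m k) = 0 := by
        funext i
        have h3 := hsum i
        rw [sum_row, himg] at h3
        exact h3
      have h3 := (mulVec_zero_iff hg _).mp h2
      intro i
      exact congrFun h3 i
    · rw [Finset.card_image_of_injective _ σ.symm.injective] at hcard; exact hcard
    · exact (Finset.disjoint_image σ.symm.injective).mp hdisj

-- ===== values of the invariant =====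

set_option maxRecDepth 100000 in
set_option maxHeartbeats 4000000 in
lemma kerInv_a1 : kerInv a1 = 2 := by decide

set_option maxRecDepth 100000 in
set_option maxHeartbeats 4000000 in
lemma kerInv_a2 : kerInv a2 = 4 := by decide

set_option maxRecDepth 100000 in
set_option maxHeartbeats 4000000 in
lemma kerInv_a7 : kerInv a7 = 0 := by decide

lemma kerInv_a5 : kerInv a5 = 2 := (kerInv_matEquiv e51).trans kerInv_a1
lemma kerInv_a3 : kerInv a3 = 4 := (kerInv_matEquiv e32).trans kerInv_a2
lemma kerInv_a4 : kerInv a4 = 4 := (kerInv_matEquiv e42).trans kerInv_a2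
lemma kerInv_a6 : kerInv a6 = 4 := (kerInv_matEquiv e62).trans kerInv_a2

lemma kerInv_A : ∀ i : Fin 7, kerInv (A i) = ![2,4,4,4,2,4,0] i := by
  intro i
  fin_cases i
  · exact kerInv_a1
  · exact kerInv_a2
  · exact kerInv_a3
  · exact kerInv_a4
  · exact kerInv_a5
  · exact kerInv_a6
  · exact kerInv_a7

set_option maxHeartbeats 1000000 in
/-- Within {a₁,…,a₇}, the equivalence classes over P₀⁴(8) are exactly
{a₁,a₅}, {a₂,a₃,a₄,a₆}, {a₇}. -/
theorem stmt4 (i j : Fin 7) : MatEquiv (A i) (A j) ↔ cls i = cls j := by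
  constructor
  · intro h
    have hv := kerInv_matEquiv h
    rw [kerInv_A i, kerInv_A j] at hv
    exact (by decide : ∀ i j : Fin 7,
      (![2,4,4,4,2,4,0] : Fin 7 → ℕ) i = ![2,4,4,4,2,4,0] j → cls i = cls j) i j hv
  · intro h
    fin_cases i <;> fin_cases j
    · exact matEquiv_refl _
    · exact absurd h (by decide)
    · exact absurd h (by decide)
    · exact absurd h (by decide)
    · exact e15
    · exact absurd h (by decide)
    · exact absurd h (by decide)
    · exact absurd h (by decide)
    · exact matEquiv_refl _
    · exact e23
    · exact e24
    · exact absurd h (by decide)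
    · exact e26
    · exact absurd h (by decide)
    · exact absurd h (by decide)
    · exact e32
    · exact matEquiv_refl _
    · exact e34
    · exact absurd h (by decide)
    · exact e36
    · exact absurd h (by decide)
    · exact absurd h (by decide)
    · exact e42
    · exact e43
    · exact matEquiv_refl _
    · exact absurd h (by decide)
    · exact e46
    · exact absurd h (by decide)
    · exact e51
    · exact absurd h (by decide)
    · exact absurd h (by decide)
    · exact absurd h (by decide)
    · exact matEquiv_refl _
    · exact absurd h (by decide)
    · exact absurd h (by decide)
    · exact absurd h (by decide)
    · exact e62
    · exact e63
    · exact e64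
    · exact absurd h (by decide)
    · exact matEquiv_refl _
    · exact absurd h (by decide)
    · exact absurd h (by decide)
    · exact absurd h (by decide)
    · exact absurd h (by decide)
    · exact absurd h (by decide)
    · exact absurd h (by decide)
    · exact absurd h (by decide)
    · exact matEquiv_refl _
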